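/- The formal power series identity (Σ_{n≥0} (d_n/n!) · z^n) · A(z) = z · A'(z) holds in ℚ[[z]]; that is, the exponential generating function of the Nörlund D-numbers d_n = D_n^{(n)} equals z·A'(z)/A(z), the logarithmic derivative form of the arcsinh power series. -/

import Mathlib

open PowerSeries

/-- Formal derivative of a rational power series. -/
noncomputable def D (f : PowerSeries ℚ) : PowerSeries ℚ :=
  PowerSeries.mk fun n => ((n + 1 : ℕ) : ℚ) * PowerSeries.coeff (R := ℚ) (n + 1) f

/-- The power series of `sinh t = (exp t − exp(−t))/2` over `ℚ`. -/
noncomputable def sinhSeries : PowerSeries ℚ :=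
  PowerSeries.C (R := ℚ) (1 / 2) *
    (PowerSeries.exp ℚ - PowerSeries.rescale (-1 : ℚ) (PowerSeries.exp ℚ))

/-- The Maclaurin series of `arcsinh` over `ℚ`:
`A(z) = Σ_{k≥0} (−1)^k (2k)!/(4^k (k!)² (2k+1)) z^{2k+1}`. -/
noncomputable def arsinhSeriesQ : PowerSeries ℚ :=
  PowerSeries.mk fun k =>
    if Odd k then
      (-1 : ℚ) ^ (k / 2) * (Nat.factorial (k - 1) : ℚ)
        / (4 ^ (k / 2) * (Nat.factorial (k / 2) : ℚ) ^ 2 * k)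
    else 0

/-!
Lagrange inversion. Write the arsinh series as `A = X * V`. Since `sinh ∘ A = X`, substituting
`A` into `ψ * sinh = X` gives `ψ ∘ A = V`. Changing variables `t = A(z)` in a coefficient
extraction, `[t^n] F(t) = [z^n] F(A(z)) A'(z) V(z)^{-(n+1)}`, because `[z^m]` of
`A' V^{-(m+1)} = V^{-m} - z (V^{-m})'/m` vanishes for `m > 0` (and is `1` for `m = 0`). So
`[t^n] ψ^n = [z^n] V^n A' V^{-(n+1)} = [z^n] A'/V`, i.e. the generating function is
`A'/V = X A'/A`. That `A` inverts `sinh` follows from `A'^2 (1 + X^2) = 1`, read off the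
coefficient recurrence of `A`: it gives `((A ∘ sinh)')^2 = A'(sinh)^2 cosh^2 = 1`.
-/

namespace PowerSeries

open Finset

section CommSemiring

variable {R : Type*} [CommSemiring R]

theorem derivative_rescale (r : R) (f : R⟦X⟧) :
    d⁄dX R (rescale r f) = C r * rescale r (d⁄dX R f) := by
  ext n
  simp only [coeff_derivative, coeff_rescale, coeff_C_mul, pow_succ]
  ring

theorem constantCoeff_rescale (r : R) (f : R⟦X⟧) :
    constantCoeff (rescale r f) = constantCoeff f := by
  rw [← coeff_zero_eq_constantCoeff_apply, coeff_rescale, pow_zero, one_mul,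
    coeff_zero_eq_constantCoeff_apply]

theorem coeff_X_mul_derivative (f : R⟦X⟧) (n : ℕ) :
    coeff n (X * d⁄dX R f) = n * coeff n f := by
  rcases n with _ | n
  · simp
  · rw [coeff_succ_X_mul, coeff_derivative, mul_comm, Nat.cast_succ]

end CommSemiring

section CommRing

variable {R : Type*} [CommRing R]

theorem coeff_pow_eq_zero_of_lt {A : R⟦X⟧} (hA : constantCoeff A = 0) {k n : ℕ} (h : n < k) :
    coeff n (A ^ k) = 0 := by
  obtain ⟨B, rfl⟩ := X_dvd_iff.mpr hA
  rw [mul_pow, coeff_X_pow_mul', if_neg h.not_ge]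

theorem coeff_subst_eq_sum_range {A : R⟦X⟧} (hA : constantCoeff A = 0) (F : R⟦X⟧)
    {i n : ℕ} (hi : i ≤ n) :
    coeff i (F.subst A) = ∑ k ∈ range (n + 1), coeff k F * coeff i (A ^ k) := by
  rw [coeff_subst' (HasSubst.of_constantCoeff_zero' hA)]
  refine finsum_eq_sum_of_support_subset _ fun k hk => ?_
  rw [coe_range, Set.mem_Iio, Nat.lt_succ_iff]
  by_contra! hlt
  exact hk (by simp only [coeff_pow_eq_zero_of_lt hA (hi.trans_lt hlt), smul_zero])

theorem constantCoeff_subst_of_constantCoeff_eq_zero {A : R⟦X⟧} (hA : constantCoeff A = 0)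
    (F : R⟦X⟧) : constantCoeff (F.subst A) = constantCoeff F := by
  simpa using coeff_subst_eq_sum_range hA F le_rfl (n := 0)

theorem coeff_subst_mul {A : R⟦X⟧} (hA : constantCoeff A = 0) (F G : R⟦X⟧) (n : ℕ) :
    coeff n (F.subst A * G) = ∑ k ∈ range (n + 1), coeff k F * coeff n (A ^ k * G) := by
  simp_rw [coeff_mul, mul_sum]
  rw [sum_comm]
  refine sum_congr rfl fun p hp => ?_
  rw [coeff_subst_eq_sum_range hA F (Finset.HasAntidiagonal.antidiagonal.fst_le hp), sum_mul]
  exact sum_congr rfl fun k _ => mul_assoc _ _ _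

theorem subst_eq_X_of_subst_eq_X {f g : R⟦X⟧} (hg : constantCoeff g = 0)
    (hg₁ : IsUnit (coeff 1 g)) (h : f.subst g = X) : g.subst f = X := by
  have hQ : HasSubst (g.substInvOfIsUnit hg₁) := HasSubst.substInvOfIsUnit g hg₁
  have hgQ := subst_substInvOfIsUnit_right g hg hg₁
  have hcomp := subst_comp_subst_apply (HasSubst.of_constantCoeff_zero' hg) hQ f
  rw [hgQ, X_subst, h, subst_X hQ] at hcomp
  rw [← hcomp, hgQ]

end CommRing

section Field

variable {K : Type*} [Field K] [CharZero K] {V : K⟦X⟧}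

theorem coeff_derivative_X_mul_mul_inv_pow (hV : constantCoeff V ≠ 0) (m : ℕ) :
    coeff m (d⁄dX K (X * V) * V⁻¹ ^ (m + 1)) = if m = 0 then 1 else 0 := by
  rcases m with _ | s
  · simp [Derivation.leibniz, hV]
  · have hVW : V * V⁻¹ = 1 := PowerSeries.mul_inv_cancel V hV
    have hW : d⁄dX K V⁻¹ = -(V⁻¹ ^ 2 * d⁄dX K V) := by
      have h := congrArg (d⁄dX K) hVW
      rw [Derivation.leibniz, Derivation.map_one_eq_zero, smul_eq_mul, smul_eq_mul] at h
      linear_combination V⁻¹ * h - d⁄dX K V⁻¹ * hVW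
    -- the `X^(s+1)`-coefficient of `(s+1) • G - X * G'` vanishes for every `G`
    have key : ((s : K) + 1) • (d⁄dX K (X * V) * V⁻¹ ^ (s + 2))
        = ((s : K) + 1) • V⁻¹ ^ (s + 1) - X * d⁄dX K (V⁻¹ ^ (s + 1)) := by
      rw [derivative_pow, hW, Derivation.leibniz, derivative_X, smul_eq_mul, smul_eq_mul]
      simp only [Algebra.smul_def, map_add, map_natCast, map_one, Nat.cast_add, Nat.cast_one,
        add_tsub_cancel_right]
      linear_combination ((s : K⟦X⟧) + 1) * V⁻¹ ^ (s + 1) * hVW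
    have h := congrArg (coeff (s + 1)) key
    rw [coeff_smul, map_sub, coeff_smul, coeff_succ_X_mul, coeff_derivative, smul_eq_mul,
      smul_eq_mul, mul_comm _ ((s : K) + 1), sub_self] at h
    simpa [Nat.cast_add_one_ne_zero] using h

theorem coeff_X_mul_pow_mul_derivative_mul_inv_pow (hV : constantCoeff V ≠ 0) (k n : ℕ) :
    coeff n ((X * V) ^ k * d⁄dX K (X * V) * V⁻¹ ^ (n + 1)) = if k = n then 1 else 0 := by
  rcases lt_or_ge n k with hnk | hkn
  · rw [mul_assoc, mul_pow, mul_assoc, coeff_X_pow_mul', if_neg hnk.not_ge, if_neg hnk.ne']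
  · have hsplit : (X * V) ^ k * d⁄dX K (X * V) * V⁻¹ ^ (n + 1)
        = X ^ k * (d⁄dX K (X * V) * V⁻¹ ^ (n - k + 1)) * (V * V⁻¹) ^ k := by
      rw [show n + 1 = n - k + 1 + k by omega]
      ring
    rw [hsplit, PowerSeries.mul_inv_cancel V hV, one_pow, mul_one, coeff_X_pow_mul', if_pos hkn,
      coeff_derivative_X_mul_mul_inv_pow hV]
    exact if_congr (by omega) rfl rfl

theorem coeff_subst_X_mul_mul_derivative_mul_inv_pow (hV : constantCoeff V ≠ 0) (F : K⟦X⟧)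
    (n : ℕ) : coeff n (F.subst (X * V) * (d⁄dX K (X * V) * V⁻¹ ^ (n + 1))) = coeff n F := by
  rw [coeff_subst_mul (by simp), sum_eq_single_of_mem n (self_mem_range_succ n)]
  · rw [← mul_assoc, coeff_X_mul_pow_mul_derivative_mul_inv_pow hV, if_pos rfl, mul_one]
  · intro k _ hkn
    rw [← mul_assoc, coeff_X_mul_pow_mul_derivative_mul_inv_pow hV, if_neg hkn, mul_zero]

theorem coeff_pow_eq_coeff_derivative_X_mul_mul_inv (hV : constantCoeff V ≠ 0) {ψ : K⟦X⟧}
    (hψ : ψ.subst (X * V) = V) (n : ℕ) :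
    coeff n (ψ ^ n) = coeff n (d⁄dX K (X * V) * V⁻¹) := by
  rw [← coeff_subst_X_mul_mul_derivative_mul_inv_pow hV,
    subst_pow (.of_constantCoeff_zero' (by simp)), hψ]
  congr 1
  calc V ^ n * (d⁄dX K (X * V) * V⁻¹ ^ (n + 1))
      = d⁄dX K (X * V) * V⁻¹ * (V * V⁻¹) ^ n := by ring
    _ = d⁄dX K (X * V) * V⁻¹ := by rw [PowerSeries.mul_inv_cancel V hV, one_pow, mul_one]

end Field

end PowerSeries

noncomputable def coshSeries : ℚ⟦X⟧ :=
  C (1 / 2 : ℚ) * (exp ℚ + rescale (-1 : ℚ) (exp ℚ))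

theorem derivative_sinhSeries : d⁄dX ℚ sinhSeries = coshSeries := by
  rw [sinhSeries, coshSeries, Derivation.leibniz, derivative_C, smul_zero, add_zero, smul_eq_mul,
    map_sub, derivative_rescale, derivative_exp]
  simp

theorem coshSeries_sq : coshSeries ^ 2 = 1 + sinhSeries ^ 2 := by
  have h : exp ℚ * rescale (-1 : ℚ) (exp ℚ) = 1 := exp_mul_exp_neg_eq_one
  have h4 : C (1 / 2 : ℚ) ^ 2 * 4 = 1 := by
    rw [← map_pow, show (4 : ℚ⟦X⟧) = C 4 from rfl, ← map_mul]; norm_num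
  rw [coshSeries, sinhSeries]
  linear_combination (4 * C (1 / 2 : ℚ) ^ 2) * h + h4

theorem constantCoeff_sinhSeries : constantCoeff sinhSeries = 0 := by
  simp [sinhSeries, constantCoeff_rescale]

theorem coeff_one_sinhSeries : coeff 1 sinhSeries = 1 := by
  simp [sinhSeries, coeff_exp]
  norm_num

theorem constantCoeff_coshSeries : constantCoeff coshSeries = 1 := by
  simp [coshSeries, constantCoeff_rescale]
  norm_num

theorem coeff_arsinhSeriesQ_two_mul (k : ℕ) : coeff (2 * k) arsinhSeriesQ = 0 := by
  rw [arsinhSeriesQ, coeff_mk, if_neg (Nat.not_odd_iff_even.mpr (even_two_mul k))]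

theorem coeff_arsinhSeriesQ_two_mul_add_one (k : ℕ) :
    coeff (2 * k + 1) arsinhSeriesQ
      = (-1) ^ k * (2 * k).factorial / (4 ^ k * (k.factorial : ℚ) ^ 2 * (2 * k + 1)) := by
  rw [arsinhSeriesQ, coeff_mk, if_pos (odd_two_mul_add_one k),
    show (2 * k + 1) / 2 = k by omega, Nat.add_sub_cancel]
  push_cast
  rfl

theorem constantCoeff_arsinhSeriesQ : constantCoeff arsinhSeriesQ = 0 := by
  simpa using coeff_arsinhSeriesQ_two_mul 0

theorem coeff_one_arsinhSeriesQ : coeff 1 arsinhSeriesQ = 1 := by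
  simpa using coeff_arsinhSeriesQ_two_mul_add_one 0

theorem constantCoeff_derivative_arsinhSeriesQ : constantCoeff (d⁄dX ℚ arsinhSeriesQ) = 1 := by
  rw [← coeff_zero_eq_constantCoeff_apply, coeff_derivative, coeff_one_arsinhSeriesQ]
  norm_num

theorem coeff_arsinhSeriesQ_add_two (n : ℕ) :
    ((n : ℚ) + 2) * (n + 1) * coeff (n + 2) arsinhSeriesQ
      = -(n : ℚ) ^ 2 * coeff n arsinhSeriesQ := by
  rcases Nat.even_or_odd' n with ⟨k, rfl | rfl⟩
  · rw [show 2 * k + 2 = 2 * (k + 1) by ring, coeff_arsinhSeriesQ_two_mul,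
      coeff_arsinhSeriesQ_two_mul]
    ring
  · rw [show 2 * k + 1 + 2 = 2 * (k + 1) + 1 by ring, coeff_arsinhSeriesQ_two_mul_add_one,
      coeff_arsinhSeriesQ_two_mul_add_one, show 2 * (k + 1) = 2 * k + 1 + 1 by ring,
      Nat.factorial_succ, Nat.factorial_succ, Nat.factorial_succ]
    push_cast
    field_simp
    ring

theorem arsinhSeriesQ_differential_equation :
    d⁄dX ℚ (d⁄dX ℚ arsinhSeriesQ) + X * d⁄dX ℚ (X * d⁄dX ℚ arsinhSeriesQ) = 0 := by
  ext n
  have h := coeff_arsinhSeriesQ_add_two n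
  rw [map_add, coeff_X_mul_derivative, coeff_X_mul_derivative, coeff_derivative,
    coeff_derivative, map_zero]
  push_cast
  linear_combination h

theorem derivative_arsinhSeriesQ_sq_mul : (d⁄dX ℚ arsinhSeriesQ) ^ 2 * (1 + X ^ 2) = 1 := by
  apply derivative.ext
  · rw [Derivation.map_one_eq_zero]
    have h := arsinhSeriesQ_differential_equation
    simp only [Derivation.leibniz, Derivation.leibniz_pow, derivative_X, map_add,
      Derivation.map_one_eq_zero, smul_eq_mul, nsmul_eq_mul] at h ⊢
    linear_combination 2 * d⁄dX ℚ arsinhSeriesQ * h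
  · simp [constantCoeff_derivative_arsinhSeriesQ]

theorem arsinhSeriesQ_subst_sinhSeries : arsinhSeriesQ.subst sinhSeries = X := by
  have hsinh : HasSubst sinhSeries := .of_constantCoeff_zero' constantCoeff_sinhSeries
  set E := arsinhSeriesQ.subst sinhSeries
  have hdE : d⁄dX ℚ E = (d⁄dX ℚ arsinhSeriesQ).subst sinhSeries * coshSeries := by
    rw [derivative_subst hsinh, derivative_sinhSeries]
  have hdE_sq : d⁄dX ℚ E ^ 2 = 1 := by
    have h := congrArg (substAlgHom hsinh (R := ℚ)) derivative_arsinhSeriesQ_sq_mul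
    simp only [map_mul, map_pow, map_add, map_one, substAlgHom_X, coe_substAlgHom] at h
    rw [hdE, mul_pow, coshSeries_sq]
    exact h
  have hdE_cc : constantCoeff (d⁄dX ℚ E) = 1 := by
    rw [hdE, map_mul, constantCoeff_subst_of_constantCoeff_eq_zero constantCoeff_sinhSeries,
      constantCoeff_derivative_arsinhSeriesQ, constantCoeff_coshSeries, mul_one]
  have hdE_one : d⁄dX ℚ E = 1 :=
    (sq_eq_one_iff.mp hdE_sq).resolve_right fun h => by norm_num [h] at hdE_cc
  refine derivative.ext (by rw [hdE_one, derivative_X]) ?_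
  rw [constantCoeff_subst_of_constantCoeff_eq_zero constantCoeff_sinhSeries,
    constantCoeff_arsinhSeriesQ, constantCoeff_X]

theorem sinhSeries_subst_arsinhSeriesQ : sinhSeries.subst arsinhSeriesQ = X :=
  subst_eq_X_of_subst_eq_X constantCoeff_sinhSeries
    (by rw [coeff_one_sinhSeries]; exact isUnit_one) arsinhSeriesQ_subst_sinhSeries

theorem D_eq_derivative (f : ℚ⟦X⟧) : D f = d⁄dX ℚ f := by
  ext n
  rw [D, coeff_mk, coeff_derivative, mul_comm, Nat.cast_succ]

/-- With the Nörlund D-numbers `d_n = n!·[t^n]((t/sinh t)^n)`, the exponential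
generating function identity `(Σ_n (d_n/n!) z^n) · A(z) = z · A'(z)` holds in
`ℚ[[z]]`, where `A` is the arcsinh power series. -/
theorem norlund_egf_eq_log_deriv_arsinh
    (ψ : PowerSeries ℚ) (hψ : ψ * sinhSeries = PowerSeries.X) :
    (PowerSeries.mk fun n =>
        ((Nat.factorial n : ℚ) * PowerSeries.coeff (R := ℚ) n (ψ ^ n)) / (Nat.factorial n : ℚ))
      * arsinhSeriesQ
    = PowerSeries.X * D arsinhSeriesQ := by
  obtain ⟨V, hV⟩ := X_dvd_iff.mpr constantCoeff_arsinhSeriesQ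
  have hV₀ : constantCoeff V ≠ 0 := by
    rw [← coeff_zero_eq_constantCoeff_apply, ← coeff_succ_X_mul, ← hV,
      coeff_one_arsinhSeriesQ]
    exact one_ne_zero
  have hA : HasSubst arsinhSeriesQ := .of_constantCoeff_zero' constantCoeff_arsinhSeriesQ
  have hψV : ψ.subst (X * V) = V := by
    have h := congrArg (subst arsinhSeriesQ) hψ
    rw [subst_mul hA, sinhSeries_subst_arsinhSeriesQ, subst_X hA, hV, mul_comm] at h
    exact mul_left_cancel₀ X_ne_zero h
  calc _ = d⁄dX ℚ arsinhSeriesQ * V⁻¹ * arsinhSeriesQ := by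
        congr 1
        ext n
        rw [coeff_mk, mul_div_cancel_left₀ _ (by positivity),
          coeff_pow_eq_coeff_derivative_X_mul_mul_inv hV₀ hψV, ← hV]
    _ = X * D arsinhSeriesQ := by
        rw [D_eq_derivative]
        linear_combination (d⁄dX ℚ arsinhSeriesQ * V⁻¹) * hV
          + (X * d⁄dX ℚ arsinhSeriesQ) * PowerSeries.inv_mul_cancel V hV₀
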